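/- arXiv:math/0406064 — 2 statements merged into one kernel-verified Lean document; each statement's English description precedes it below -/
import Mathlib

section
/- Let (sₖ)_{k≥1} be positive integers, m₀ = b, m₁ = b^{s₁-1}a, m_{k+1} = m_k^{s_{k+1}} m_{k-1}, and let m_φ be the infinite Sturmian word which is the limit of the m_k. Then for every k ≥ 3, the longest common prefix of m_φ and the infinite periodic word m_k m_k m_k ⋯ is exactly m_k^{1+s_{k+1}} m'_{k-1}, where w' denotes w with its last two letters removed. -/
/-- `w.drop2` is the word `w` deprived of its last two letters. -/
def drop2 {A : Type*} (w : List A) : List A := w.dropLast.dropLast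

/-- `wordPow w t` is the `t`-fold concatenation `w^t`. -/
def wordPow {A : Type*} (w : List A) (t : ℕ) : List A := (List.replicate t w).flatten

/-- `l` is a prefix of the infinite word `f : ℕ → A`. -/
def IsPrefixOfInf {A : Type*} (l : List A) (f : ℕ → A) : Prop :=
  l = (List.range l.length).map f

section Aux
variable {A : Type*}

lemma wordPow_succ (w : List A) (t : ℕ) : wordPow w (t+1) = w ++ wordPow w t := by
  simp [wordPow, List.replicate_succ]

lemma wordPow_succ' (w : List A) (t : ℕ) : wordPow w (t+1) = wordPow w t ++ w := by
  simp [wordPow, List.replicate_succ']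

lemma wordPow_comm (w : List A) (t : ℕ) : w ++ wordPow w t = wordPow w t ++ w := by
  rw [← wordPow_succ, wordPow_succ']

lemma wordPow_length (w : List A) (t : ℕ) : (wordPow w t).length = t * w.length := by
  induction t with
  | zero => simp [wordPow]
  | succ n ih => rw [wordPow_succ, List.length_append, ih]; ring

lemma IsPrefixOfInf.of_prefix {l₁ l₂ : List A} {f : ℕ → A} (h : l₁ <+: l₂)
    (h2 : IsPrefixOfInf l₂ f) : IsPrefixOfInf l₁ f := by
  obtain ⟨t, rfl⟩ := h
  unfold IsPrefixOfInf at h2 ⊢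
  rw [List.length_append, List.range_add, List.map_append] at h2
  exact (List.append_inj h2 (by simp)).1

lemma IsPrefixOfInf.getEq {l : List A} {x : A} {f : ℕ → A}
    (h : IsPrefixOfInf (l ++ [x]) f) : f l.length = x := by
  unfold IsPrefixOfInf at h
  rw [List.length_append, List.length_singleton, List.range_succ, List.map_append] at h
  have := (List.append_inj h (by simp)).2
  simpa using this.symm

lemma wordPow_isPrefixOfInf (w : List A) (a : A) (t : ℕ) :
    IsPrefixOfInf (wordPow w t) (fun i => w.getD (i % w.length) a) := by
  unfold IsPrefixOfInf
  rw [wordPow_length]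
  induction t with
  | zero => simp [wordPow]
  | succ n ih =>
    rw [wordPow_succ', Nat.succ_mul, List.range_add, List.map_append, ← ih]
    congr 1
    rw [List.map_map]
    apply List.ext_getElem (by simp)
    intro i h1 h2
    simp only [List.getElem_map, List.getElem_range, Function.comp_apply]
    have hi : i < w.length := by simpa using h2
    rw [Nat.add_comm, Nat.add_mul_mod_self_right, Nat.mod_eq_of_lt hi,
      List.getD_eq_getElem _ _ hi]

lemma exists_drop2 {l : List A} (h : 2 ≤ l.length) :
    ∃ u x y, l = u ++ [x, y] ∧ drop2 l = u := by
  obtain ⟨x, t, ht⟩ := List.exists_cons_of_ne_nil (l := l.reverse) (by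
    intro hc; rw [List.reverse_eq_nil_iff] at hc; simp [hc] at h)
  obtain ⟨y, r, hr⟩ := List.exists_cons_of_ne_nil (l := t) (by
    intro hc; subst hc; have := congrArg List.length ht; simp at this; omega)
  subst hr
  have hl : l = r.reverse ++ [y, x] := by
    have : l = (x :: y :: r).reverse := by rw [← ht]; simp
    simpa using this
  refine ⟨r.reverse, y, x, hl, ?_⟩
  rw [hl]
  show ((r.reverse ++ [y,x]).dropLast).dropLast = r.reverse
  rw [show r.reverse ++ [y,x] = (r.reverse ++ [y]) ++ [x] by simp]
  rw [List.dropLast_concat, List.dropLast_concat]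

end Aux

/-- Lemma 5.2: for every `k ≥ 3`, the longest common prefix of the Sturmian
word `m_φ = lim m_k` and the infinite periodic word `m_k m_k ⋯` is exactly
`m_k^{1+s_{k+1}} m'_{k-1}`: this word is a common prefix and the two infinite
words differ at the next letter. -/
theorem stmt9 {A : Type*} (a b : A) (hab : a ≠ b) (s : ℕ → ℕ) (hs : ∀ k, 1 ≤ s k)
    (m : ℕ → List A) (hm0 : m 0 = [b])
    (hm1 : m 1 = List.replicate (s 1 - 1) b ++ [a])
    (hmr : ∀ k : ℕ, 1 ≤ k → m (k + 1) = wordPow (m k) (s (k + 1)) ++ m (k - 1))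
    (mφ : ℕ → A) (hφ : ∀ k : ℕ, 1 ≤ k → IsPrefixOfInf (m k) mφ) :
    ∀ k : ℕ, 3 ≤ k →
      IsPrefixOfInf (wordPow (m k) (1 + s (k + 1)) ++ drop2 (m (k - 1))) mφ ∧
      IsPrefixOfInf (wordPow (m k) (1 + s (k + 1)) ++ drop2 (m (k - 1)))
        (fun i => (m k).getD (i % (m k).length) a) ∧
      mφ (wordPow (m k) (1 + s (k + 1)) ++ drop2 (m (k - 1))).length ≠
        (m k).getD ((wordPow (m k) (1 + s (k + 1)) ++ drop2 (m (k - 1))).length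
          % (m k).length) a := by
  -- basic structural facts
  have hstep : ∀ j, 1 ≤ j → m j <+: m (j+1) := by
    intro j hj
    rw [hmr j hj]
    obtain ⟨t, ht⟩ : ∃ t, s (j+1) = t + 1 := ⟨s (j+1) - 1, by have := hs (j+1); omega⟩
    rw [ht, wordPow_succ, List.append_assoc]
    exact List.prefix_append _ _
  have hchain : ∀ i j, 1 ≤ i → i ≤ j → m i <+: m j := by
    intro i j hi hij
    induction j, hij using Nat.le_induction with
    | base => exact List.prefix_rfl
    | succ n hn ih => exact ih.trans (hstep n (le_trans hi hn))
  have hlen1 : (m 1).length = s 1 := by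
    rw [hm1]
    simp only [List.length_append, List.length_replicate, List.length_singleton]
    have := hs 1; omega
  have hm2 : m 2 = wordPow (m 1) (s 2) ++ [b] := by
    have h := hmr 1 le_rfl
    norm_num at h
    rw [h, hm0]
  have hlen2 : ∀ j, 2 ≤ j → 2 ≤ (m j).length := by
    intro j hj
    have h2 : 2 ≤ (m 2).length := by
      rw [hm2, List.length_append, wordPow_length, hlen1, List.length_singleton]
      have := hs 1; have := hs 2
      nlinarith
    exact le_trans h2 (hchain 2 j (by omega) hj).length_le
  -- the swap lemma
  have hswap : ∀ j, 1 ≤ j → ∃ w x y, x ≠ y ∧ m j ++ m (j+1) = w ++ [x, y] ∧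
      m (j+1) ++ m j = w ++ [y, x] := by
    intro j hj
    induction j, hj using Nat.le_induction with
    | base =>
      refine ⟨wordPow (m 1) (s 2) ++ List.replicate (s 1 - 1) b, a, b, hab, ?_, ?_⟩
      · calc m 1 ++ m 2 = (m 1 ++ wordPow (m 1) (s 2)) ++ [b] := by
              rw [hm2, List.append_assoc]
          _ = (wordPow (m 1) (s 2) ++ m 1) ++ [b] := by rw [wordPow_comm]
          _ = _ := by rw [hm1]; simp
      · have hbr : b :: List.replicate (s 1 - 1) b = List.replicate (s 1 - 1) b ++ [b] := by
          rw [← List.replicate_succ, List.replicate_succ']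
        calc m 2 ++ m 1 = wordPow (m 1) (s 2) ++ (b :: List.replicate (s 1 - 1) b) ++ [a] := by
              rw [hm2, hm1]; simp
          _ = _ := by rw [hbr]; simp
    | succ n hn ih =>
      obtain ⟨w, x, y, hxy, h1, h2⟩ := ih
      have hm' : m (n+2) = wordPow (m (n+1)) (s (n+2)) ++ m n := by
        have h := hmr (n+1) (by omega)
        norm_num at h
        exact h
      refine ⟨wordPow (m (n+1)) (s (n+2)) ++ w, y, x, hxy.symm, ?_, ?_⟩
      · calc m (n+1) ++ m (n+2)
            = (m (n+1) ++ wordPow (m (n+1)) (s (n+2))) ++ m n := by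
              rw [hm', List.append_assoc]
          _ = wordPow (m (n+1)) (s (n+2)) ++ (m (n+1) ++ m n) := by
              rw [wordPow_comm, List.append_assoc]
          _ = _ := by rw [h2]; simp
      · calc m (n+2) ++ m (n+1)
            = wordPow (m (n+1)) (s (n+2)) ++ (m n ++ m (n+1)) := by rw [hm']; simp
          _ = _ := by rw [h1]; simp
  -- main argument
  intro k hk
  obtain ⟨p, rfl⟩ : ∃ p, k = p + 3 := ⟨k - 3, by omega⟩
  have e1 : p + 3 - 1 = p + 2 := by omega
  have e2 : p + 3 + 1 = p + 4 := by omega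
  rw [e1, e2]
  obtain ⟨w, x, y, hxy, hA, hB⟩ := hswap (p+2) (by omega)
  have e3 : p + 2 + 1 = p + 3 := by omega
  rw [e3] at hA hB
  obtain ⟨u, x0, y0, hu, hdrop⟩ := exists_drop2 (hlen2 (p+2) (by omega))
  have hB' : (m (p+3) ++ u) ++ [x0, y0] = w ++ [y, x] := by
    rw [List.append_assoc, ← hu]; exact hB
  obtain ⟨hw, -⟩ := List.append_inj' hB' rfl
  have hm4 : m (p+4) = wordPow (m (p+3)) (s (p+4)) ++ m (p+2) := by
    have h := hmr (p+3) (by omega)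
    rw [e1, e2] at h
    exact h
  have hm5 : m (p+5) = wordPow (m (p+4)) (s (p+5)) ++ m (p+3) := by
    have h := hmr (p+4) (by omega)
    rw [show p + 4 + 1 = p + 5 by omega, show p + 4 - 1 = p + 3 by omega] at h
    exact h
  -- P = wordPow (s) ++ w
  have hP : wordPow (m (p+3)) (1 + s (p+4)) ++ drop2 (m (p+2)) =
      wordPow (m (p+3)) (s (p+4)) ++ w := by
    rw [hdrop, ← hw, Nat.add_comm 1, wordPow_succ', List.append_assoc]
  have hkey1 : m (p+4) ++ m (p+3) = (wordPow (m (p+3)) (s (p+4)) ++ w) ++ [x, y] := by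
    rw [hm4, List.append_assoc, hA, ← List.append_assoc]
  -- m(p+4) ++ m(p+3) is a prefix of m(p+5), hence of mφ
  have hpre1 : IsPrefixOfInf (m (p+4) ++ m (p+3)) mφ := by
    refine IsPrefixOfInf.of_prefix ?_ (hφ (p+5) (by omega))
    rw [hm5]
    obtain ⟨t, ht⟩ : ∃ t, s (p+5) = t + 1 := ⟨s (p+5) - 1, by have := hs (p+5); omega⟩
    rw [ht, wordPow_succ, List.append_assoc]
    have h3 : m (p+3) <+: wordPow (m (p+4)) t ++ m (p+3) := by
      cases t with
      | zero => simp [wordPow]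
      | succ r =>
        rw [wordPow_succ, List.append_assoc]
        exact (hstep (p+3) (by omega)).trans (List.prefix_append _ _)
    obtain ⟨r, hr⟩ := h3
    exact ⟨r, by rw [List.append_assoc, hr]⟩
  have hφval : mφ (wordPow (m (p+3)) (s (p+4)) ++ w).length = x := by
    refine IsPrefixOfInf.getEq (IsPrefixOfInf.of_prefix ⟨[y], ?_⟩ hpre1)
    rw [hkey1]
    simp
  have goal1 : IsPrefixOfInf (wordPow (m (p+3)) (s (p+4)) ++ w) mφ :=
    IsPrefixOfInf.of_prefix ⟨[x, y], hkey1.symm⟩ hpre1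
  -- periodic side
  have hper := wordPow_isPrefixOfInf (m (p+3)) a (s (p+4) + 2)
  have hpre2 : ((wordPow (m (p+3)) (s (p+4)) ++ w) ++ [y, x]) <+:
      wordPow (m (p+3)) (s (p+4) + 2) := by
    have h2 : wordPow (m (p+3)) (s (p+4) + 2) =
        (wordPow (m (p+3)) (s (p+4)) ++ m (p+3)) ++ m (p+3) := by
      rw [show s (p+4) + 2 = (s (p+4) + 1) + 1 by omega, wordPow_succ', wordPow_succ']
    obtain ⟨r, hr⟩ := hstep (p+2) (by omega)
    rw [e3] at hr
    refine ⟨r, ?_⟩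
    calc ((wordPow (m (p+3)) (s (p+4)) ++ w) ++ [y, x]) ++ r
        = wordPow (m (p+3)) (s (p+4)) ++ ((w ++ [y, x]) ++ r) := by simp
      _ = wordPow (m (p+3)) (s (p+4)) ++ ((m (p+3) ++ m (p+2)) ++ r) := by rw [hB]
      _ = (wordPow (m (p+3)) (s (p+4)) ++ m (p+3)) ++ (m (p+2) ++ r) := by simp
      _ = (wordPow (m (p+3)) (s (p+4)) ++ m (p+3)) ++ m (p+3) := by rw [hr]
      _ = wordPow (m (p+3)) (s (p+4) + 2) := h2.symm
  have hperP : IsPrefixOfInf ((wordPow (m (p+3)) (s (p+4)) ++ w) ++ [y, x])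
      (fun i => (m (p+3)).getD (i % (m (p+3)).length) a) :=
    IsPrefixOfInf.of_prefix hpre2 hper
  have goal2 : IsPrefixOfInf (wordPow (m (p+3)) (s (p+4)) ++ w)
      (fun i => (m (p+3)).getD (i % (m (p+3)).length) a) :=
    IsPrefixOfInf.of_prefix ⟨[y, x], rfl⟩ hperP
  have hgval : (m (p+3)).getD ((wordPow (m (p+3)) (s (p+4)) ++ w).length
      % (m (p+3)).length) a = y := by
    have := IsPrefixOfInf.getEq (f := fun i => (m (p+3)).getD (i % (m (p+3)).length) a)
      (l := wordPow (m (p+3)) (s (p+4)) ++ w) (x := y)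
      (IsPrefixOfInf.of_prefix ⟨[x], by rw [List.append_assoc]; rfl⟩ hperP)
    simpa using this
  rw [hP]
  exact ⟨goal1, goal2, by rw [hφval, hgval]; exact hxy⟩
end

section
/- Let a ≠ b be distinct positive integers, (sₖ)_{k≥1} positive integers, and for ℓ = ℓ_k + t (where ℓ_k = s₂ + ⋯ + s_k, ℓ₁ = 0, 1 ≤ t ≤ s_{k+1}) let x_ℓ denote the integer triple corresponding to the symmetric matrix M_k^t M'_{k-1}. Then for every k ≥ 3: det(x_{ℓ_k}, x_{ℓ_k+1}, x_{ℓ_k+2}) = ±(b-a); in particular the three consecutive points x_{ℓ_k}, x_{ℓ_k+1}, x_{ℓ_k+2} are linearly independent over ℚ. -/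
/-!
Write `A_ℓ = (ℓ 1; 1 0)`, `M_k` for the matrix of `m_k` and `M'_k = M_k C_k`, where `C_k`
inverts the matrix of the last two letters of `m_k`. These letters alternate between `a b` and
`b a`, so `C_k` has period two and `M'_k` obeys the recurrence `X_{k+2} = M_{k+1}^{s_{k+2}} X_k`
of the `M_k`. Induction then gives `M_{k+1} M'_k = M_k M'_{k+1}`.

By Cayley–Hamilton, `det(X, P Y, P Z) = det P · det(X, Y, Z)` for `Y, Z` in the span of `S` and
`P S`, so along an orbit `P^t S` the determinant only picks up the unit `det P = ±1`. Hence
`E_k = det(M'_k, M_{k+1} M'_k, M'_{k+1})` changes only by a sign from `k` to `k + 1`, while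
`E_0 = ±det(A_a⁻¹, 1, A_b⁻¹) = ±(b - a)`. A last application of Cayley–Hamilton identifies the
determinant of the three points with `det M_k · E_{k-1}`.
-/

def wordMatrix (m : List ℤ) : Matrix (Fin 2) (Fin 2) ℤ :=
  (m.map fun ℓ => !![ℓ, 1; 1, 0]).prod

/-- The triple `(x₀, x₁, x₂)` associated to a symmetric matrix `(x₀ x₁; x₁ x₂)`. -/
def triple (N : Matrix (Fin 2) (Fin 2) ℤ) : Fin 3 → ℤ :=
  ![N 0 0, N 0 1, N 1 1]

local notation "Mat₂" => Matrix (Fin 2) (Fin 2) ℤ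

def letterMatrix (x : ℤ) : Mat₂ := !![x, 1; 1, 0]

def letterMatrixInv (x : ℤ) : Mat₂ := !![0, 1; 1, -x]

@[simp]
lemma letterMatrix_mul_letterMatrixInv (x : ℤ) : letterMatrix x * letterMatrixInv x = 1 := by
  simp [letterMatrix, letterMatrixInv, Matrix.one_fin_two]

lemma det_letterMatrix (x : ℤ) : (letterMatrix x).det = -1 := by
  simp [letterMatrix, Matrix.det_fin_two_of]

lemma wordMatrix_cons (x : ℤ) (l : List ℤ) :
    wordMatrix (x :: l) = letterMatrix x * wordMatrix l := by
  simp [wordMatrix, letterMatrix]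

lemma wordMatrix_singleton (x : ℤ) : wordMatrix [x] = letterMatrix x := by
  simp [wordMatrix, letterMatrix]

lemma wordMatrix_append (u v : List ℤ) : wordMatrix (u ++ v) = wordMatrix u * wordMatrix v := by
  simp [wordMatrix]

lemma wordMatrix_replicate (n : ℕ) (x : ℤ) :
    wordMatrix (List.replicate n x) = letterMatrix x ^ n := by
  induction n with
  | zero => rfl
  | succ n ih => rw [List.replicate_succ, wordMatrix_cons, ih, pow_succ']

lemma wordMatrix_flatten_replicate (n : ℕ) (l : List ℤ) :
    wordMatrix (List.replicate n l).flatten = wordMatrix l ^ n := by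
  induction n with
  | zero => rfl
  | succ n ih => rw [List.replicate_succ, List.flatten_cons, wordMatrix_append, ih, pow_succ']

lemma isUnit_det_wordMatrix (l : List ℤ) : IsUnit (wordMatrix l).det := by
  induction l with
  | nil => simp [wordMatrix]
  | cons x l ih =>
    rw [wordMatrix_cons, Matrix.det_mul, det_letterMatrix]
    exact isUnit_one.neg.mul ih

lemma wordMatrix_dropLast_dropLast_of_suffix {x y : ℤ} {l : List ℤ} (h : [x, y] <:+ l) :
    wordMatrix (l.dropLast.dropLast) = wordMatrix l * (letterMatrixInv y * letterMatrixInv x) := by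
  obtain ⟨p, rfl⟩ := h
  rw [show p ++ [x, y] = p ++ [x] ++ [y] by simp, List.dropLast_concat, List.dropLast_concat,
    wordMatrix_append, wordMatrix_append, wordMatrix_singleton, wordMatrix_singleton, mul_assoc,
    mul_assoc]
  simp [← mul_assoc (letterMatrix y)]

namespace List

variable {α : Type*}

lemma IsSuffix.flatten_replicate {l u : List α} (h : l <:+ u) {n : ℕ} (hn : 0 < n) :
    l <:+ (replicate n u).flatten := by
  obtain ⟨t, rfl⟩ := Nat.exists_eq_add_of_lt hn
  rw [replicate_succ', flatten_append, flatten_singleton]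
  exact h.trans (suffix_append _ _)

lemma IsSuffix.pair_append_singleton {x y : α} {u : List α} (h : [x] <:+ u) :
    [x, y] <:+ u ++ [y] := by
  obtain ⟨p, rfl⟩ := h
  exact ⟨p, by simp⟩

end List

def tripleDet (X Y Z : Mat₂) : ℤ :=
  (Matrix.of ![triple X, triple Y, triple Z]).det

lemma tripleDet_swap13 (X Y Z : Mat₂) : tripleDet X Y Z = -tripleDet Z Y X := by
  simp [tripleDet, Matrix.det_fin_three]; ring

lemma tripleDet_swap23 (X Y Z : Mat₂) : tripleDet X Y Z = -tripleDet X Z Y := by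
  simp [tripleDet, Matrix.det_fin_three]; ring

/-- By Cayley–Hamilton, `P * (P * S) = tr P • (P * S) - det P • S`. -/
lemma tripleDet_mul_mul (X P S : Mat₂) :
    tripleDet X (P * (P * S)) (P * S) = P.det * tripleDet X (P * S) S := by
  simp [tripleDet, triple, Matrix.det_fin_three, Matrix.mul_apply, Fin.sum_univ_two,
    Matrix.det_fin_two]
  ring

lemma tripleDet_mul_mul_self_mul (X P S : Mat₂) :
    tripleDet X (P * S) (P * P * S) = P.det * tripleDet S (P * S) X := by
  rw [mul_assoc, tripleDet_swap23, tripleDet_mul_mul, tripleDet_swap13 X]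
  ring

lemma tripleDet_pow_succ_pow (X P S : Mat₂) (t : ℕ) :
    tripleDet X (P ^ (t + 1) * S) (P ^ t * S) = P.det ^ t * tripleDet X (P * S) S := by
  induction t with
  | zero => simp
  | succ t ih =>
    have h1 : P ^ (t + 1) * S = P * (P ^ t * S) := by rw [pow_succ', mul_assoc]
    have h2 : P ^ (t + 2) * S = P * (P * (P ^ t * S)) := by rw [pow_succ', mul_assoc, h1]
    rw [h2, h1, tripleDet_mul_mul, ← h1, ih, pow_succ]
    ring

lemma tripleDet_letterMatrixInv_one (a b : ℤ) :
    tripleDet (letterMatrixInv a) 1 (letterMatrixInv b) = b - a := by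
  simp [tripleDet, triple, letterMatrixInv, Matrix.det_fin_three]
  ring

lemma succ_mul_eq_mul_succ_of_recurrence {M : Type*} [Monoid M] {P W : ℕ → M} {e : ℕ → ℕ}
    (hP : ∀ k, P (k + 2) = P (k + 1) ^ e (k + 2) * P k)
    (hW : ∀ k, W (k + 2) = P (k + 1) ^ e (k + 2) * W k)
    (h0 : P 1 * W 0 = P 0 * W 1) (k : ℕ) :
    P (k + 1) * W k = P k * W (k + 1) := by
  induction k with
  | zero => exact h0
  | succ k ih =>
    rw [hP, hW, mul_assoc, ← ih, ← mul_assoc, ← mul_assoc, ← pow_succ, ← pow_succ']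

lemma tripleDet_associated_of_recurrence {P W : ℕ → Mat₂} {e : ℕ → ℕ}
    (hP : ∀ k, P (k + 2) = P (k + 1) ^ e (k + 2) * P k)
    (hW : ∀ k, W (k + 2) = P (k + 1) ^ e (k + 2) * W k)
    (h0 : P 1 * W 0 = P 0 * W 1) (hdet : ∀ k, IsUnit (P k).det) (k : ℕ) :
    Associated (tripleDet (W k) (P (k + 1) * W k) (W (k + 1)))
      (tripleDet (W 0) (P 1 * W 0) (W 1)) := by
  induction k with
  | zero => rfl
  | succ k ih =>
    have hPW : P (k + 2) * W (k + 1) = P (k + 1) ^ (e (k + 2) + 1) * W k := by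
      rw [succ_mul_eq_mul_succ_of_recurrence hP hW h0 (k + 1), hW, ← mul_assoc, ← pow_succ']
    have hstep : tripleDet (W (k + 1)) (P (k + 2) * W (k + 1)) (W (k + 2)) =
        (P (k + 1)).det ^ e (k + 2) * -tripleDet (W k) (P (k + 1) * W k) (W (k + 1)) := by
      rw [hPW, hW, tripleDet_pow_succ_pow, tripleDet_swap13]
    rw [hstep]
    exact (associated_unit_mul_left _ _ ((hdet _).pow _)).trans ih.neg_left

lemma linearIndependent_intCast_rows_of_det_ne_zero {ι : Type*} [Fintype ι] [DecidableEq ι]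
    {A : Matrix ι ι ℤ} (hA : A.det ≠ 0) : LinearIndependent ℚ fun i j => (A i j : ℚ) :=
  Matrix.linearIndependent_rows_of_det_ne_zero (A := A.map (Int.cast : ℤ → ℚ)) <| by
    rw [← Int.cast_det]
    exact_mod_cast hA

structure IsSturmianWords (a b : ℤ) (s : ℕ → ℕ) (m : ℕ → List ℤ) : Prop where
  zero : m 0 = [b]
  one : m 1 = List.replicate (s 1 - 1) b ++ [a]
  add_two : ∀ k, m (k + 2) = (List.replicate (s (k + 2)) (m (k + 1))).flatten ++ m k

/-- The inverse of the matrix of the last two letters of `m k`, which are `a b` for even `k ≥ 2`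
and `b a` for odd `k ≥ 2`. -/
def tailInv (a b : ℤ) (k : ℕ) : Mat₂ :=
  if Even k then letterMatrixInv b * letterMatrixInv a else letterMatrixInv a * letterMatrixInv b

/-- `M'_k` for `k ≥ 2`; for `k = 0, 1` it extends the recurrence of the `M'_k` backwards. -/
def primeMatrix (a b : ℤ) (m : ℕ → List ℤ) (k : ℕ) : Mat₂ :=
  wordMatrix (m k) * tailInv a b k

lemma tailInv_add_two (a b : ℤ) (k : ℕ) : tailInv a b (k + 2) = tailInv a b k := by
  simp [tailInv, Nat.even_add]

namespace IsSturmianWords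

variable {a b : ℤ} {s : ℕ → ℕ} {m : ℕ → List ℤ} (hm : IsSturmianWords a b s m)
include hm

lemma wordMatrix_add_two (k : ℕ) :
    wordMatrix (m (k + 2)) = wordMatrix (m (k + 1)) ^ s (k + 2) * wordMatrix (m k) := by
  rw [hm.add_two, wordMatrix_append, wordMatrix_flatten_replicate]

lemma primeMatrix_add_two (k : ℕ) :
    primeMatrix a b m (k + 2) = wordMatrix (m (k + 1)) ^ s (k + 2) * primeMatrix a b m k := by
  rw [primeMatrix, primeMatrix, hm.wordMatrix_add_two, tailInv_add_two, mul_assoc]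

lemma wordMatrix_one : wordMatrix (m 1) = letterMatrix b ^ (s 1 - 1) * letterMatrix a := by
  rw [hm.one, wordMatrix_append, wordMatrix_replicate, wordMatrix_singleton]

lemma primeMatrix_zero : primeMatrix a b m 0 = letterMatrixInv a := by
  simp [primeMatrix, tailInv, hm.zero, wordMatrix_singleton, ← mul_assoc]

lemma primeMatrix_one :
    primeMatrix a b m 1 = letterMatrix b ^ (s 1 - 1) * letterMatrixInv b := by
  simp [primeMatrix, tailInv, hm.wordMatrix_one, mul_assoc, ← mul_assoc (letterMatrix a)]

lemma wordMatrix_one_mul_primeMatrix_zero :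
    wordMatrix (m 1) * primeMatrix a b m 0 = letterMatrix b ^ (s 1 - 1) := by
  rw [hm.wordMatrix_one, hm.primeMatrix_zero, mul_assoc, letterMatrix_mul_letterMatrixInv,
    mul_one]

lemma wordMatrix_zero_mul_primeMatrix_one :
    wordMatrix (m 0) * primeMatrix a b m 1 = letterMatrix b ^ (s 1 - 1) := by
  rw [hm.zero, wordMatrix_singleton, hm.primeMatrix_one, ← mul_assoc, ← pow_succ', pow_succ,
    mul_assoc, letterMatrix_mul_letterMatrixInv, mul_one]

lemma tripleDet_primeMatrix_associated (k : ℕ) :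
    Associated
      (tripleDet (primeMatrix a b m k) (wordMatrix (m (k + 1)) * primeMatrix a b m k)
        (primeMatrix a b m (k + 1))) (b - a) := by
  refine (tripleDet_associated_of_recurrence hm.wordMatrix_add_two hm.primeMatrix_add_two
    (hm.wordMatrix_one_mul_primeMatrix_zero.trans hm.wordMatrix_zero_mul_primeMatrix_one.symm)
    (fun k => isUnit_det_wordMatrix _) k).trans ?_
  have hB : letterMatrix b ^ (s 1 - 1) =
      letterMatrix b ^ (s 1 - 1 + 1) * letterMatrixInv b := by
    rw [pow_succ, mul_assoc, letterMatrix_mul_letterMatrixInv, mul_one]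
  rw [hm.wordMatrix_one_mul_primeMatrix_zero, hB, hm.primeMatrix_zero, hm.primeMatrix_one,
    tripleDet_pow_succ_pow, letterMatrix_mul_letterMatrixInv, tripleDet_letterMatrixInv_one,
    det_letterMatrix]
  exact associated_unit_mul_left _ _ (isUnit_one.neg.pow _)

lemma lastTwo_suffix (hs : ∀ k, 1 ≤ s k) (k : ℕ) :
    (if Even k then [a, b] else [b, a]) <:+ m (k + 2) := by
  induction k using Nat.twoStepInduction with
  | zero =>
    have ha1 : [a] <:+ m 1 := hm.one ▸ List.suffix_append _ _
    rw [if_pos Even.zero, hm.add_two 0, hm.zero]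
    exact (ha1.flatten_replicate (hs 2)).pair_append_singleton
  | one =>
    have hb2 : [b] <:+ m 2 := by
      rw [hm.add_two 0, hm.zero]
      exact List.suffix_append _ _
    rw [if_neg Nat.not_even_one, hm.add_two 1, hm.one]
    cases h : s 1 - 1 with
    | zero => exact (hb2.flatten_replicate (hs 3)).pair_append_singleton
    | succ t =>
      rw [List.replicate_succ']
      exact (List.suffix_append _ [b]).pair_append_singleton.trans (List.suffix_append _ _)
  | more k ih _ =>
    rw [hm.add_two (k + 2)]
    simp only [Nat.even_add, even_two, iff_true]
    exact ih.trans (List.suffix_append _ _)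

lemma wordMatrix_dropLast_dropLast (hs : ∀ k, 1 ≤ s k) {k : ℕ} (hk : 2 ≤ k) :
    wordMatrix (m k).dropLast.dropLast = primeMatrix a b m k := by
  obtain ⟨j, rfl⟩ := Nat.exists_eq_add_of_le' hk
  have h := hm.lastTwo_suffix hs j
  rw [primeMatrix, tailInv_add_two, tailInv]
  split_ifs at h ⊢ <;> exact wordMatrix_dropLast_dropLast_of_suffix h

lemma tripleDet_dropLast_associated (hs : ∀ k, 1 ≤ s k) {k : ℕ} (hk : 3 ≤ k) :
    Associated
      (tripleDet (wordMatrix (m k).dropLast.dropLast)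
        (wordMatrix (m k) * wordMatrix (m (k - 1)).dropLast.dropLast)
        (wordMatrix (m k) * wordMatrix (m k) * wordMatrix (m (k - 1)).dropLast.dropLast))
      (b - a) := by
  rw [hm.wordMatrix_dropLast_dropLast hs (by omega), hm.wordMatrix_dropLast_dropLast hs (by omega),
    tripleDet_mul_mul_self_mul]
  obtain ⟨j, rfl⟩ := Nat.exists_eq_add_of_le' hk
  exact (associated_unit_mul_left _ _ (isUnit_det_wordMatrix _)).trans
    (hm.tripleDet_primeMatrix_associated (j + 2))

end IsSturmianWords

theorem stmt18_general (a b : ℤ) (hab : a ≠ b)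
    (s : ℕ → ℕ) (hs : ∀ k, 1 ≤ s k) (m : ℕ → List ℤ)
    (hm0 : m 0 = [b]) (hm1 : m 1 = List.replicate (s 1 - 1) b ++ [a])
    (hmr : ∀ k : ℕ, 1 ≤ k →
      m (k + 1) = (List.replicate (s (k + 1)) (m k)).flatten ++ m (k - 1)) :
    ∀ k : ℕ, 3 ≤ k →
      ((Matrix.of ![triple (wordMatrix ((m k).dropLast.dropLast)),
          triple (wordMatrix (m k) * wordMatrix ((m (k - 1)).dropLast.dropLast)),
          triple (wordMatrix (m k) * wordMatrix (m k) *
            wordMatrix ((m (k - 1)).dropLast.dropLast))]).det = b - a ∨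
       (Matrix.of ![triple (wordMatrix ((m k).dropLast.dropLast)),
          triple (wordMatrix (m k) * wordMatrix ((m (k - 1)).dropLast.dropLast)),
          triple (wordMatrix (m k) * wordMatrix (m k) *
            wordMatrix ((m (k - 1)).dropLast.dropLast))]).det = a - b) ∧
      LinearIndependent ℚ
        ![(fun i => (triple (wordMatrix ((m k).dropLast.dropLast)) i : ℚ)),
          (fun i => (triple (wordMatrix (m k) *
            wordMatrix ((m (k - 1)).dropLast.dropLast)) i : ℚ)),
          (fun i => (triple (wordMatrix (m k) * wordMatrix (m k) *
            wordMatrix ((m (k - 1)).dropLast.dropLast)) i : ℚ))] := by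
  have hm : IsSturmianWords a b s m := ⟨hm0, hm1, fun k => hmr (k + 1) k.succ_pos⟩
  intro k hk
  have hdet := hm.tripleDet_dropLast_associated hs hk
  have hne := hdet.ne_zero_iff.mpr (sub_ne_zero.mpr hab.symm)
  rw [Int.associated_iff, neg_sub] at hdet
  refine ⟨hdet, ?_⟩
  convert linearIndependent_intCast_rows_of_det_ne_zero hne using 1
  funext i
  fin_cases i <;> rfl

/-- Lemma 7.1 (ii): for the Sturmian words `m_k` on distinct positive integers
`a ≠ b`, with `x_{ℓ_k} = M'_k`, `x_{ℓ_k+1} = M_k M'_{k-1}`,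
`x_{ℓ_k+2} = M_k² M'_{k-1}`, one has
`det(x_{ℓ_k}, x_{ℓ_k+1}, x_{ℓ_k+2}) = ±(b-a)`; in particular these three
points are linearly independent over `ℚ`. -/
theorem stmt18 (a b : ℤ) (ha : 0 < a) (hb : 0 < b) (hab : a ≠ b)
    (s : ℕ → ℕ) (hs : ∀ k, 1 ≤ s k) (m : ℕ → List ℤ)
    (hm0 : m 0 = [b]) (hm1 : m 1 = List.replicate (s 1 - 1) b ++ [a])
    (hmr : ∀ k : ℕ, 1 ≤ k →
      m (k + 1) = (List.replicate (s (k + 1)) (m k)).flatten ++ m (k - 1)) :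
    ∀ k : ℕ, 3 ≤ k →
      ((Matrix.of ![triple (wordMatrix ((m k).dropLast.dropLast)),
          triple (wordMatrix (m k) * wordMatrix ((m (k - 1)).dropLast.dropLast)),
          triple (wordMatrix (m k) * wordMatrix (m k) *
            wordMatrix ((m (k - 1)).dropLast.dropLast))]).det = b - a ∨
       (Matrix.of ![triple (wordMatrix ((m k).dropLast.dropLast)),
          triple (wordMatrix (m k) * wordMatrix ((m (k - 1)).dropLast.dropLast)),
          triple (wordMatrix (m k) * wordMatrix (m k) *
            wordMatrix ((m (k - 1)).dropLast.dropLast))]).det = a - b) ∧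
      LinearIndependent ℚ
        ![(fun i => (triple (wordMatrix ((m k).dropLast.dropLast)) i : ℚ)),
          (fun i => (triple (wordMatrix (m k) *
            wordMatrix ((m (k - 1)).dropLast.dropLast)) i : ℚ)),
          (fun i => (triple (wordMatrix (m k) * wordMatrix (m k) *
            wordMatrix ((m (k - 1)).dropLast.dropLast)) i : ℚ))] :=
  stmt18_general a b hab s hs m hm0 hm1 hmr
end
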